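/- For partitions X and Y of Ω, the conditional entropy H(X|Y) := H(X∨Y) − H(Y) equals μ(ΔX \ ΔY), the sum of μ(S) over atoms crossed by X but not by Y. -/

import Mathlib

/-!
`μ` is the Möbius inverse of `T ↦ p(T) log p(T)` on the lattice of subsets, so summing `μ` over the
nonempty subsets of `A` gives `p(A) log p(A)`. The atoms not crossed by `X` are exactly the nonempty
subsets of single parts, and all nonempty atoms together sum to `p(Ω) log p(Ω) = 0`; hence
`H(X) = μ(ΔX)`. An atom is crossed by `X ∨ Y` iff it is crossed by `X` or by `Y`, so
`Δ(X ∨ Y) = ΔX ∪ ΔY` and `H(X ∨ Y) - H(Y) = μ(ΔX ∪ ΔY) - μ(ΔY) = μ(ΔX \ ΔY)`.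
-/

open Finset BigOperators

variable {Ω : Type*} [Fintype Ω] [DecidableEq Ω]

/-- Probability of a subset: `p(T) = Σ_{ω∈T} p(ω)`. -/
def pS (p : Ω → ℝ) (T : Finset Ω) : ℝ := ∑ ω ∈ T, p ω

/-- `p(T) log p(T)` (with `0 log 0 = 0` since `Real.log 0 = 0`). -/
noncomputable def plog (p : Ω → ℝ) (T : Finset Ω) : ℝ := pS p T * Real.log (pS p T)

/-- The interior-loss measure of an atom `S`. -/
noncomputable def mu (p : Ω → ℝ) (S : Finset Ω) : ℝ :=
  ∑ T ∈ S.powerset.filter (· ≠ ∅), (-1 : ℝ) ^ (S.card - T.card) * plog p T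

/-- `μ` of a set of atoms, extended additively. -/
noncomputable def muSet (p : Ω → ℝ) (R : Finset (Finset Ω)) : ℝ := ∑ S ∈ R, mu p S

/-- A partition `X` crosses an atom `S` when `S` meets at least two distinct parts. -/
def crossed (X : Finpartition (univ : Finset Ω)) (S : Finset Ω) : Prop :=
  ∃ P ∈ X.parts, ∃ Q ∈ X.parts, P ≠ Q ∧ (S ∩ P).Nonempty ∧ (S ∩ Q).Nonempty

open scoped Classical in
/-- The content `ΔX`: set of atoms crossed by the partition `X`. -/
noncomputable def content (X : Finpartition (univ : Finset Ω)) : Finset (Finset Ω) :=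
  (univ : Finset (Finset Ω)).filter (fun S => 2 ≤ S.card ∧ crossed X S)

/-- Shannon entropy of a partition. -/
noncomputable def Hent (p : Ω → ℝ) (X : Finpartition (univ : Finset Ω)) : ℝ :=
  - ∑ P ∈ X.parts, pS p P * Real.log (pS p P)

/-- `X` refines `Z`: every part of `X` lies in a part of `Z`. -/
def refines (X Z : Finpartition (univ : Finset Ω)) : Prop :=
  ∀ P ∈ X.parts, ∃ Q ∈ Z.parts, P ⊆ Q

section MoebiusInversion

variable {α R : Type*} [DecidableEq α] [CommRing R]

theorem sum_Icc_neg_one_pow_card_sub {U S : Finset α} (h : U ⊆ S) :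
    ∑ T ∈ Icc U S, (-1 : R) ^ (#T - #U) = if U = S then 1 else 0 := by
  have hdisj : ∀ V ∈ (S \ U).powerset, Disjoint U V := fun V hV =>
    disjoint_of_subset_right (mem_powerset.1 hV) disjoint_sdiff
  rw [Icc_eq_image_powerset h, sum_image fun V hV W hW hVW => by
    rw [← (hdisj V hV).sdiff_eq_right, ← (hdisj W hW).sdiff_eq_right, ← union_sdiff_left U V, hVW,
      union_sdiff_left]]
  have hsum := congrArg (Int.cast : ℤ → R) (sum_powerset_neg_one_pow_card (x := S \ U))
  push_cast at hsum
  rw [sum_congr rfl fun V hV => by rw [card_union_of_disjoint (hdisj V hV), Nat.add_sub_cancel_left],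
    hsum]
  exact if_congr (sdiff_eq_empty_iff_subset.trans ⟨h.antisymm, fun hUS => hUS.symm.subset⟩) rfl rfl

theorem sum_powerset_sum_powerset_neg_one_pow (f : Finset α → R) (S : Finset α) :
    ∑ T ∈ S.powerset, ∑ U ∈ T.powerset, (-1 : R) ^ (#T - #U) * f U = f S := by
  rw [sum_comm' (t' := S.powerset) (s' := fun U => Icc U S) fun T U => by
    simp only [mem_powerset, mem_Icc]
    exact ⟨fun ⟨hTS, hUT⟩ => ⟨⟨hUT, hTS⟩, hUT.trans hTS⟩, fun ⟨⟨hUT, hTS⟩, _⟩ => ⟨hTS, hUT⟩⟩]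
  simp_rw [← sum_mul]
  rw [sum_eq_single_of_mem S (mem_powerset_self S)]
  · simp
  · intro U hU hne
    rw [sum_Icc_neg_one_pow_card_sub (mem_powerset.1 hU), if_neg hne, zero_mul]

end MoebiusInversion

section Crossing

variable {W X Y : Finpartition (univ : Finset Ω)} {S : Finset Ω}

theorem crossed.nonempty (h : crossed X S) : S.Nonempty := by
  obtain ⟨P, -, -, -, -, ⟨ω, hω⟩, -⟩ := h
  exact ⟨ω, (mem_inter.1 hω).1⟩

theorem crossed.two_le_card (h : crossed X S) : 2 ≤ #S := by
  obtain ⟨P, hP, Q, hQ, hPQ, ⟨ω, hω⟩, ⟨ω', hω'⟩⟩ := h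
  rw [mem_inter] at hω hω'
  refine one_lt_card.2 ⟨ω, hω.1, ω', hω'.1, fun h => ?_⟩
  exact disjoint_left.1 (X.disjoint hP hQ hPQ) hω.2 (h ▸ hω'.2)

theorem not_crossed_iff_exists_subset (hS : S.Nonempty) :
    ¬ crossed X S ↔ ∃ P ∈ X.parts, S ⊆ P := by
  constructor
  · intro h
    obtain ⟨ω, hω⟩ := hS
    obtain ⟨P, hP, hωP⟩ := X.exists_mem (mem_univ ω)
    refine ⟨P, hP, fun ω' hω' => by_contra fun hω'P => ?_⟩
    obtain ⟨Q, hQ, hω'Q⟩ := X.exists_mem (mem_univ ω')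
    exact h ⟨P, hP, Q, hQ, fun e => hω'P (e ▸ hω'Q), ⟨ω, mem_inter.2 ⟨hω, hωP⟩⟩,
      ⟨ω', mem_inter.2 ⟨hω', hω'Q⟩⟩⟩
  · rintro ⟨R, hR, hSR⟩ ⟨P, hP, Q, hQ, hPQ, ⟨ω, hω⟩, ⟨ω', hω'⟩⟩
    rw [mem_inter] at hω hω'
    exact hPQ ((X.eq_of_mem_parts hP hR hω.2 (hSR hω.1)).trans
      (X.eq_of_mem_parts hQ hR hω'.2 (hSR hω'.1)).symm)

theorem crossed.of_le (hWX : W ≤ X) (h : crossed X S) : crossed W S := by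
  by_contra hW
  obtain ⟨R, hR, hSR⟩ := (not_crossed_iff_exists_subset h.nonempty).1 hW
  obtain ⟨P, hP, hRP⟩ := hWX hR
  exact (not_crossed_iff_exists_subset h.nonempty).2 ⟨P, hP, hSR.trans hRP⟩ h

theorem crossed_inf_iff : crossed (X ⊓ Y) S ↔ crossed X S ∨ crossed Y S := by
  refine ⟨fun h => ?_, fun h => h.elim (crossed.of_le inf_le_left) (crossed.of_le inf_le_right)⟩
  have hS := h.nonempty
  by_contra! hXY
  obtain ⟨P, hP, hSP⟩ := (not_crossed_iff_exists_subset hS).1 hXY.1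
  obtain ⟨Q, hQ, hSQ⟩ := (not_crossed_iff_exists_subset hS).1 hXY.2
  have hPQ : P ∩ Q ∈ (X ⊓ Y).parts := by
    rw [Finpartition.parts_inf, mem_erase, mem_image]
    exact ⟨(hS.mono (subset_inter hSP hSQ)).ne_empty, (P, Q), mem_product.2 ⟨hP, hQ⟩, rfl⟩
  exact (not_crossed_iff_exists_subset hS).2 ⟨P ∩ Q, hPQ, subset_inter hSP hSQ⟩ h

theorem mem_content : S ∈ content X ↔ crossed X S := by
  classical
  simpa [content] using fun h => h.two_le_card

theorem content_inf : content (X ⊓ Y) = content X ∪ content Y := by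
  ext S
  simp only [mem_union, mem_content, crossed_inf_iff]

end Crossing

section MoebiusFunction

variable {α : Type*} [DecidableEq α] (p : α → ℝ)

theorem mu_eq_sum_powerset (S : Finset α) :
    mu p S = ∑ T ∈ S.powerset, (-1 : ℝ) ^ (#S - #T) * plog p T := by
  rw [mu, sum_filter]
  refine sum_congr rfl fun T _ => ?_
  split_ifs with hT
  · rfl
  · simp [not_not.1 hT, plog, pS]

theorem mu_empty : mu p ∅ = 0 := by
  simp [mu, filter_singleton]

theorem sum_powerset_mu (S : Finset α) : ∑ T ∈ S.powerset, mu p T = plog p S := by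
  simp_rw [mu_eq_sum_powerset]
  exact sum_powerset_sum_powerset_neg_one_pow (plog p) S

end MoebiusFunction

section Entropy

variable (p : Ω → ℝ)

theorem sum_compl_content_mu (X : Finpartition (univ : Finset Ω)) :
    ∑ S ∈ (content X)ᶜ, mu p S = ∑ P ∈ X.parts, plog p P := by
  have hsplit : (content X)ᶜ.erase ∅ = X.parts.biUnion fun P => P.powerset.erase ∅ := by
    ext S
    simp only [mem_erase, mem_compl, mem_content, mem_biUnion, mem_powerset]
    rcases S.eq_empty_or_nonempty with rfl | hS
    · simp
    · simp [hS.ne_empty, not_crossed_iff_exists_subset hS]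
  have hdisj : (X.parts : Set (Finset Ω)).PairwiseDisjoint fun P => P.powerset.erase ∅ := by
    intro P hP Q hQ hPQ
    simp only [Function.onFun, disjoint_left, mem_erase, mem_powerset]
    rintro T ⟨hT, hTP⟩ ⟨-, hTQ⟩
    obtain ⟨ω, hω⟩ := nonempty_iff_ne_empty.2 hT
    exact disjoint_left.1 (X.disjoint hP hQ hPQ) (hTP hω) (hTQ hω)
  rw [← sum_erase _ (mu_empty p), hsplit, sum_biUnion hdisj]
  exact sum_congr rfl fun P _ => by rw [sum_erase _ (mu_empty p), sum_powerset_mu]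

theorem Hent_eq_muSet_content (hsum : ∑ ω, p ω = 1) (X : Finpartition (univ : Finset Ω)) :
    Hent p X = muSet p (content X) := by
  have htotal : ∑ S, mu p S = 0 := by
    rw [← powerset_univ, sum_powerset_mu]
    simp [plog, pS, hsum]
  rw [← sum_add_sum_compl (content X), sum_compl_content_mu] at htotal
  rw [Hent, muSet]
  change -∑ P ∈ X.parts, plog p P = _
  linarith

end Entropy

theorem condEntropy_eq_muSet_sdiff_general {Ω : Type*} [Fintype Ω] [DecidableEq Ω] (p : Ω → ℝ)
    (hsum : ∑ ω, p ω = 1)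
    (X Y : Finpartition (univ : Finset Ω)) :
    Hent p (X ⊓ Y) - Hent p Y = muSet p (content X \ content Y) := by
  rw [Hent_eq_muSet_content p hsum, Hent_eq_muSet_content p hsum, content_inf, muSet, muSet, muSet,
    ← union_sdiff_right, sum_sdiff_eq_sub subset_union_right]

theorem condEntropy_eq_muSet_sdiff {Ω : Type*} [Fintype Ω] [DecidableEq Ω] (p : Ω → ℝ)
    (hp : ∀ ω, 0 ≤ p ω) (hsum : ∑ ω, p ω = 1)
    (X Y : Finpartition (univ : Finset Ω)) :
    Hent p (X ⊓ Y) - Hent p Y = muSet p (content X \ content Y) :=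
  condEntropy_eq_muSet_sdiff_general p hsum X Y
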